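/- arXiv:1908.04583 — 3 statements merged into one kernel-verified Lean document; each statement's English description precedes it below -/
import Mathlib

section
/- Let v: ℝ → ℝ be locally Lipschitz and bounded below, and j: ℝ → ℝ ∪ {+∞} be proper, lower-semicontinuous, and μ-convex with μ > 0. Then for any τ > 0, x ∈ dom(∂j), and p ∈ ∂j(x), there exists y ∈ ℝ and q ∈ ∂j(y) such that either y ≠ x and q = p - τ (v(y) - v(x))/(y - x), or y = x and q = p - τw for some w in the Clarke subdifferential ∂v(x). -/
open Filter Set

/-- Convexity for `f : ℝ → ℝ ∪ {+∞}` (extended-real-valued). -/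
def ERealConvexR (f : ℝ → EReal) : Prop :=
  ∀ x y : ℝ, ∀ a b : ℝ, 0 ≤ a → 0 ≤ b → a + b = 1 →
    f (a * x + b * y) ≤ (a : EReal) * f x + (b : EReal) * f y

/-- The convex subdifferential of `j : ℝ → ℝ ∪ {+∞}`. -/
def subdiffR (j : ℝ → EReal) (x : ℝ) : Set ℝ :=
  {p | ∀ z, j x + (((p * (z - x) : ℝ)) : EReal) ≤ j z}

/-- The Clarke directional derivative of `v : ℝ → ℝ`. -/
noncomputable def clarkeDerivR (v : ℝ → ℝ) (x d : ℝ) : ℝ :=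
  Filter.limsup (fun q : ℝ × ℝ => (v (q.1 + q.2 * d) - v q.1) / q.2)
    ((nhds x) ×ˢ (nhdsWithin 0 (Set.Ioi 0)))

/-- The Clarke subdifferential of `v : ℝ → ℝ`. -/
noncomputable def clarkeSubdiffR (v : ℝ → ℝ) (x : ℝ) : Set ℝ :=
  {w | ∀ d : ℝ, d * w ≤ clarkeDerivR v x d}

lemma finite_of_subdiffR {j : ℝ → EReal} (hnotbot : ∀ z, j z ≠ ⊥) {z₀ : ℝ} (hz₀ : j z₀ ≠ ⊤)
    {x s : ℝ} (hs : s ∈ subdiffR j x) : ∃ A : ℝ, j x = (A : EReal) := by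
  refine ⟨(j x).toReal, (EReal.coe_toReal ?_ (hnotbot x)).symm⟩
  intro htop
  have h := hs z₀
  rw [htop, EReal.top_add_coe] at h
  exact hz₀ (top_le_iff.mp h)

lemma strong_subgradR {j : ℝ → EReal} (hnotbot : ∀ z, j z ≠ ⊥) {μ : ℝ}
    (hconv : ERealConvexR (fun z => j z - ((μ / 2 * z ^ 2 : ℝ) : EReal)))
    {x A : ℝ} (hA : j x = (A : EReal)) {s : ℝ} (hs : s ∈ subdiffR j x) (z : ℝ) :
    ((A + s * (z - x) + μ / 4 * (z - x) ^ 2 : ℝ) : EReal) ≤ j z := by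
  rcases eq_or_ne (j z) ⊤ with hz | hz
  · rw [hz]; exact le_top
  obtain ⟨C, hC⟩ : ∃ C : ℝ, j z = (C : EReal) :=
    ⟨(j z).toReal, (EReal.coe_toReal hz (hnotbot z)).symm⟩
  have hcv := hconv x z (1/2) (1/2) (by norm_num) (by norm_num) (by norm_num)
  simp only [] at hcv
  rw [hA, hC] at hcv
  have hrhs : ((((1:ℝ)/2 : ℝ) : EReal) * ((A : EReal) - ((μ/2*x^2 : ℝ) : EReal)) +
      (((1:ℝ)/2 : ℝ) : EReal) * ((C : EReal) - ((μ/2*z^2 : ℝ) : EReal)))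
      = ((1/2 * (A - μ/2*x^2) + 1/2 * (C - μ/2*z^2) : ℝ) : EReal) := by norm_cast
  rw [hrhs] at hcv
  have hmT : j (1/2 * x + 1/2 * z) ≠ ⊤ := by
    intro hT
    rw [hT, EReal.top_sub_coe] at hcv
    exact EReal.coe_ne_top _ (top_le_iff.mp hcv)
  obtain ⟨B, hB⟩ : ∃ B : ℝ, j (1/2 * x + 1/2 * z) = (B : EReal) :=
    ⟨_, (EReal.coe_toReal hmT (hnotbot _)).symm⟩
  rw [hB, ← EReal.coe_sub] at hcv
  have hcv' := EReal.coe_le_coe_iff.mp hcv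
  have hsm := hs (1/2 * x + 1/2 * z)
  rw [hA, hB, ← EReal.coe_add] at hsm
  have hsm' := EReal.coe_le_coe_iff.mp hsm
  rw [hC]
  exact EReal.coe_le_coe_iff.mpr (by nlinarith [hcv', hsm'])

lemma two_pointR {j : ℝ → EReal} (hnotbot : ∀ z, j z ≠ ⊥) {z₀ : ℝ} (hz₀ : j z₀ ≠ ⊤) {μ : ℝ}
    (hconv : ERealConvexR (fun z => j z - ((μ / 2 * z ^ 2 : ℝ) : EReal)))
    {y₁ y₂ s₁ s₂ : ℝ} (h₁ : s₁ ∈ subdiffR j y₁) (h₂ : s₂ ∈ subdiffR j y₂) :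
    μ / 2 * (y₂ - y₁) ^ 2 ≤ (s₂ - s₁) * (y₂ - y₁) := by
  obtain ⟨A₁, hA₁⟩ := finite_of_subdiffR hnotbot hz₀ h₁
  obtain ⟨A₂, hA₂⟩ := finite_of_subdiffR hnotbot hz₀ h₂
  have e1 := strong_subgradR hnotbot hconv hA₁ h₁ y₂
  have e2 := strong_subgradR hnotbot hconv hA₂ h₂ y₁
  rw [hA₂] at e1
  rw [hA₁] at e2
  have e1' := EReal.coe_le_coe_iff.mp e1
  have e2' := EReal.coe_le_coe_iff.mp e2
  nlinarith [e1', e2']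

lemma exists_min_Icc {f : ℝ → EReal} (hlsc : LowerSemicontinuous f) {a b : ℝ} (hab : a ≤ b) :
    ∃ y ∈ Icc a b, ∀ z ∈ Icc a b, f y ≤ f z := by
  set S := f '' Icc a b with hS
  have hSne : S.Nonempty := (nonempty_Icc.2 hab).image f
  obtain ⟨u, -, hu, humem⟩ := exists_seq_tendsto_sInf hSne (OrderBot.bddBelow S)
  simp only [hS, Set.mem_image] at humem
  choose z hz hfz using humem
  obtain ⟨y, hy, φ, hφ, hzy⟩ := tendsto_subseq_of_bounded (Metric.isBounded_Icc a b) hz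
  rw [isClosed_Icc.closure_eq] at hy
  refine ⟨y, hy, fun w hw => le_trans ?_ (sInf_le (mem_image_of_mem f hw))⟩
  by_contra hlt
  push_neg at hlt
  obtain ⟨c, hc1, hc2⟩ := exists_between hlt
  have hev := hlsc y c hc2
  have hev2 := hzy.eventually hev
  have : c ≤ sInf S := by
    refine ge_of_tendsto (hu.comp hφ.tendsto_atTop) ?_
    filter_upwards [hev2] with n hn
    show c ≤ u (φ n)
    rw [← hfz (φ n)]
    exact hn.le
  exact absurd hc1 this.not_gt

lemma exists_subdiff_pre {j : ℝ → EReal} (hnotbot : ∀ z, j z ≠ ⊥)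
    (hlsc : LowerSemicontinuous j) {μ x A p : ℝ} (hμ : 0 < μ)
    (hA : j x = (A : EReal))
    (hstrong : ∀ z, ((A + p * (z - x) + μ / 4 * (z - x) ^ 2 : ℝ) : EReal) ≤ j z)
    (s : ℝ) : ∃ y, s ∈ subdiffR j y := by
  set K : ℝ := 4 * (|p - s| + 1) / μ + 1 with hK
  have hK0 : 0 < K := by positivity
  have hKmu : μ * K = 4 * (|p - s| + 1) + μ := by rw [hK]; field_simp
  have hFlsc : LowerSemicontinuous (fun z : ℝ => j z + ((-(s*z) : ℝ) : EReal)) := by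
    refine LowerSemicontinuous.add' hlsc
      ((continuous_coe_real_ereal.comp (by continuity)).lowerSemicontinuous) ?_
    intro z
    exact EReal.continuousAt_add (Or.inr (EReal.coe_ne_bot _)) (Or.inr (EReal.coe_ne_top _))
  obtain ⟨y, hyI, hymin⟩ := exists_min_Icc hFlsc (show x - K ≤ x + K by linarith)
  have hxI : x ∈ Icc (x - K) (x + K) := ⟨by linarith, by linarith⟩
  have hFyx := hymin x hxI
  have hyT : j y ≠ ⊤ := by
    intro hT
    rw [hT, EReal.top_add_coe, hA, ← EReal.coe_add] at hFyx
    exact EReal.coe_ne_top _ (top_le_iff.mp hFyx)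
  obtain ⟨B, hB⟩ : ∃ B : ℝ, j y = (B : EReal) := ⟨_, (EReal.coe_toReal hyT (hnotbot _)).symm⟩
  refine ⟨y, fun z => ?_⟩
  rcases eq_or_ne (j z) ⊤ with hz | hz
  · rw [hz]; exact le_top
  obtain ⟨C, hC⟩ : ∃ C : ℝ, j z = (C : EReal) := ⟨_, (EReal.coe_toReal hz (hnotbot _)).symm⟩
  have hmain : B + (-(s*y)) ≤ C + (-(s*z)) := by
    by_cases hzI : z ∈ Icc (x - K) (x + K)
    · have := hymin z hzI
      rw [hB, hC, ← EReal.coe_add, ← EReal.coe_add] at this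
      exact EReal.coe_le_coe_iff.mp this
    · have h1 := hstrong z
      rw [hC] at h1
      have h1' := EReal.coe_le_coe_iff.mp h1
      have hxe := hFyx
      rw [hA, hB, ← EReal.coe_add, ← EReal.coe_add] at hxe
      have hxe' := EReal.coe_le_coe_iff.mp hxe
      have habs : K ≤ |z - x| := by
        rw [Set.mem_Icc] at hzI
        push_neg at hzI
        rcases lt_or_ge z (x - K) with h | h
        · exact le_abs.mpr (Or.inr (by linarith))
        · exact le_abs.mpr (Or.inl (by linarith [hzI h]))
      have key : (p - s) * (z - x) + μ/4 * (z - x)^2 ≥ 0 := by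
        nlinarith [sq_abs (z - x), abs_mul (p - s) (z - x), neg_abs_le ((p - s) * (z - x)),
          abs_nonneg (p - s), abs_nonneg (z - x), hμ,
          mul_le_mul_of_nonneg_left habs (le_of_lt hμ)]
      nlinarith [h1', hxe']
  rw [hB, hC, ← EReal.coe_add]
  exact EReal.coe_le_coe_iff.mpr (by linarith)

lemma le_clarkeDerivR {v : ℝ → ℝ} {x ε L : ℝ} (hε : 0 < ε) (hL : 0 ≤ L)
    (hlip : ∀ y z : ℝ, |y - x| < ε → |z - x| < ε → |v y - v z| ≤ L * |y - z|)
    (d : ℝ) {w : ℕ → ℝ × ℝ}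
    (hw1 : Tendsto (fun n => (w n).1) atTop (nhds x))
    (hw2 : ∀ n, 0 < (w n).2)
    (hw3 : Tendsto (fun n => (w n).2) atTop (nhds 0))
    {l : ℝ}
    (hl : Tendsto (fun n => (v ((w n).1 + (w n).2 * d) - v (w n).1) / (w n).2) atTop (nhds l)) :
    l ≤ clarkeDerivR v x d := by
  set g : ℝ × ℝ → ℝ := fun q => (v (q.1 + q.2 * d) - v q.1) / q.2 with hg
  set F : Filter (ℝ × ℝ) := (nhds x) ×ˢ (nhdsWithin 0 (Set.Ioi 0)) with hF
  have hck : clarkeDerivR v x d = Filter.limsup g F := rfl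
  have hT : Tendsto w atTop F := by
    rw [hF]
    refine tendsto_prod_iff'.mpr ⟨hw1, ?_⟩
    rw [tendsto_nhdsWithin_iff]
    exact ⟨hw3, Eventually.of_forall fun n => hw2 n⟩
  have hbound : ∀ᶠ q in F, g q ≤ L * (|d| + 1) := by
    have hmem : (Metric.ball x (ε/2)) ×ˢ (Ioo (0:ℝ) (ε / (2 * (|d| + 1)))) ∈ F := by
      rw [hF]
      exact prod_mem_prod (Metric.ball_mem_nhds x (by positivity))
        (Ioo_mem_nhdsGT_of_mem ⟨le_refl 0, by positivity⟩)
    filter_upwards [hmem] with q hq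
    obtain ⟨hq1, hq2⟩ := hq
    rw [Metric.mem_ball, Real.dist_eq] at hq1
    obtain ⟨hq2a, hq2b⟩ := hq2
    have habs : |q.1 + q.2 * d - x| < ε := by
      have h1 : |q.1 + q.2 * d - x| ≤ |q.1 - x| + q.2 * |d| := by
        calc |q.1 + q.2 * d - x| = |(q.1 - x) + q.2 * d| := by ring_nf
          _ ≤ |q.1 - x| + |q.2 * d| := abs_add_le _ _
          _ = |q.1 - x| + q.2 * |d| := by rw [abs_mul, abs_of_pos hq2a]
      have h2 : q.2 * |d| ≤ ε / 2 := by
        have : q.2 * (|d| + 1) ≤ ε / (2 * (|d| + 1)) * (|d| + 1) :=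
          mul_le_mul_of_nonneg_right hq2b.le (by positivity)
        have he : ε / (2 * (|d| + 1)) * (|d| + 1) = ε / 2 := by field_simp
        nlinarith [abs_nonneg d, hq2a.le]
      linarith
    have hvb : |v (q.1 + q.2 * d) - v q.1| ≤ L * (q.2 * |d|) := by
      have := hlip (q.1 + q.2 * d) q.1 habs (by linarith)
      calc |v (q.1 + q.2 * d) - v q.1| ≤ L * |q.1 + q.2 * d - q.1| := this
        _ = L * (q.2 * |d|) := by rw [show q.1 + q.2 * d - q.1 = q.2 * d by ring, abs_mul,
            abs_of_pos hq2a]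
    have : g q ≤ L * |d| := by
      rw [hg]
      simp only []
      rw [div_le_iff₀ hq2a]
      calc v (q.1 + q.2 * d) - v q.1 ≤ |v (q.1 + q.2 * d) - v q.1| := le_abs_self _
        _ ≤ L * (q.2 * |d|) := hvb
        _ = L * |d| * q.2 := by ring
    nlinarith [this, hL]
  have hbdd : IsBoundedUnder (· ≤ ·) F g := ⟨L * (|d| + 1), by rwa [eventually_map]⟩
  by_contra hcon
  push_neg at hcon
  rw [hck] at hcon
  have hev : ∀ᶠ q in F, g q < (Filter.limsup g F + l) / 2 :=
    Filter.eventually_lt_of_limsup_lt (by linarith) hbdd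
  have hle : l ≤ (Filter.limsup g F + l) / 2 :=
    le_of_tendsto hl ((hT.eventually hev).mono fun n h => h.le)
  linarith

lemma clarke_mem_right {v : ℝ → ℝ} {x ε L : ℝ} (hε : 0 < ε) (hL : 0 ≤ L)
    (hlip : ∀ y z : ℝ, |y - x| < ε → |z - x| < ε → |v y - v z| ≤ L * |y - z|)
    {h : ℕ → ℝ} (hpos : ∀ n, 0 < h n) (h0 : Tendsto h atTop (nhds 0))
    {Δ : ℝ} (hΔ : Tendsto (fun n => (v (x + h n) - v x) / h n) atTop (nhds Δ)) :
    Δ ∈ clarkeSubdiffR v x := by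
  intro d
  rcases lt_trichotomy d 0 with hd | hd | hd
  · have heq : (fun n => (v ((x + h n) + (h n / -d) * d) - v (x + h n)) / (h n / -d))
        = fun n => d * ((v (x + h n) - v x) / h n) := by
      funext n
      have hn := (hpos n).ne'
      have hd' : d ≠ 0 := hd.ne
      rw [show (x + h n) + (h n / -d) * d = x by
        rw [div_neg, neg_mul, div_mul_cancel₀ _ hd']; ring]
      rw [div_neg, div_neg]
      field_simp
      ring
    exact le_clarkeDerivR hε hL hlip d
      (w := fun n => (x + h n, h n / -d))
      (by simpa using tendsto_const_nhds.add h0)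
      (fun n => div_pos (hpos n) (neg_pos.2 hd))
      (by simpa using h0.div_const (-d))
      (heq ▸ hΔ.const_mul d)
  · subst hd
    have hzero : clarkeDerivR v x 0 = 0 := by
      have hf : (fun q : ℝ × ℝ => (v (q.1 + q.2 * 0) - v q.1) / q.2) = fun _ => (0:ℝ) := by
        funext q; simp
      rw [clarkeDerivR, hf, limsup_const]
    rw [hzero, zero_mul]
  · have heq : (fun n => (v (x + (h n / d) * d) - v x) / (h n / d))
        = fun n => d * ((v (x + h n) - v x) / h n) := by
      funext n
      have hn := (hpos n).ne'
      have hd' : d ≠ 0 := hd.ne'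
      rw [div_mul_cancel₀ _ hd']
      field_simp
    exact le_clarkeDerivR hε hL hlip d
      (w := fun n => (x, h n / d))
      tendsto_const_nhds
      (fun n => div_pos (hpos n) hd)
      (by simpa using h0.div_const d)
      (heq ▸ hΔ.const_mul d)

lemma clarke_mem_left {v : ℝ → ℝ} {x ε L : ℝ} (hε : 0 < ε) (hL : 0 ≤ L)
    (hlip : ∀ y z : ℝ, |y - x| < ε → |z - x| < ε → |v y - v z| ≤ L * |y - z|)
    {h : ℕ → ℝ} (hpos : ∀ n, 0 < h n) (h0 : Tendsto h atTop (nhds 0))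
    {Δ : ℝ} (hΔ : Tendsto (fun n => (v (x - h n) - v x) / (-(h n))) atTop (nhds Δ)) :
    Δ ∈ clarkeSubdiffR v x := by
  intro d
  rcases lt_trichotomy d 0 with hd | hd | hd
  · have heq : (fun n => (v (x + (h n / -d) * d) - v x) / (h n / -d))
        = fun n => d * ((v (x - h n) - v x) / (-(h n))) := by
      funext n
      have hn := (hpos n).ne'
      have hd' : d ≠ 0 := hd.ne
      rw [show x + (h n / -d) * d = x - h n by
        rw [div_neg, neg_mul, div_mul_cancel₀ _ hd']; ring]
      rw [div_div_eq_mul_div, div_neg]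
      ring
    exact le_clarkeDerivR hε hL hlip d
      (w := fun n => (x, h n / -d))
      tendsto_const_nhds
      (fun n => div_pos (hpos n) (neg_pos.2 hd))
      (by simpa using h0.div_const (-d))
      (heq ▸ hΔ.const_mul d)
  · subst hd
    have hzero : clarkeDerivR v x 0 = 0 := by
      have hf : (fun q : ℝ × ℝ => (v (q.1 + q.2 * 0) - v q.1) / q.2) = fun _ => (0:ℝ) := by
        funext q; simp
      rw [clarkeDerivR, hf, limsup_const]
    rw [hzero, zero_mul]
  · have heq : (fun n => (v ((x - h n) + (h n / d) * d) - v (x - h n)) / (h n / d))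
        = fun n => d * ((v (x - h n) - v x) / (-(h n))) := by
      funext n
      have hn := (hpos n).ne'
      have hd' : d ≠ 0 := hd.ne'
      rw [show (x - h n) + (h n / d) * d = x by rw [div_mul_cancel₀ _ hd']; ring]
      rw [div_neg]
      field_simp
      ring
    exact le_clarkeDerivR hε hL hlip d
      (w := fun n => (x - h n, h n / d))
      (by simpa using tendsto_const_nhds.sub h0)
      (fun n => div_pos (hpos n) hd)
      (by simpa using h0.div_const d)
      (heq ▸ hΔ.const_mul d)

lemma clarke_between {v : ℝ → ℝ} {x w a b : ℝ} (ha : a ∈ clarkeSubdiffR v x)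
    (hb : b ∈ clarkeSubdiffR v x) (h1 : a ≤ w) (h2 : w ≤ b) : w ∈ clarkeSubdiffR v x := by
  intro d
  rcases le_total 0 d with hd | hd
  · calc d * w ≤ d * b := mul_le_mul_of_nonneg_left h2 hd
      _ ≤ _ := hb d
  · calc d * w ≤ d * a := mul_le_mul_of_nonpos_left h1 hd
      _ ≤ _ := ha d

set_option maxHeartbeats 2000000 in
/-- existence of an update for the scalar Bregman Itoh–Abe step. -/
theorem scalar_bregman_itoh_abe_existence
    (v : ℝ → ℝ) (hv : LocallyLipschitz v) (hbdd : BddBelow (Set.range v))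
    (j : ℝ → EReal) (hnotbot : ∀ z, j z ≠ ⊥) (hproper : ∃ z, j z ≠ ⊤)
    (hlsc : LowerSemicontinuous j)
    (μ : ℝ) (hμ : 0 < μ)
    (hconv : ERealConvexR (fun z => j z - ((μ / 2 * z ^ 2 : ℝ) : EReal)))
    (τ : ℝ) (hτ : 0 < τ)
    (x : ℝ) (p : ℝ) (hp : p ∈ subdiffR j x) :
    ∃ y q, q ∈ subdiffR j y ∧
      ((y ≠ x ∧ q = p - τ * (v y - v x) / (y - x)) ∨
        (y = x ∧ ∃ w ∈ clarkeSubdiffR v x, q = p - τ * w)) := by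
  classical
  obtain ⟨z₀, hz₀⟩ := hproper
  obtain ⟨A, hA⟩ := finite_of_subdiffR hnotbot hz₀ hp
  have hstrong := strong_subgradR hnotbot hconv hA hp
  have hRex : ∀ s : ℝ, ∃ y, s ∈ subdiffR j y :=
    fun s => exists_subdiff_pre hnotbot hlsc hμ hA hstrong s
  set R : ℝ → ℝ := fun s => (hRex s).choose with hRdef
  have hR : ∀ s, s ∈ subdiffR j (R s) := fun s => (hRex s).choose_spec
  have htwo : ∀ s t : ℝ, μ / 2 * (R t - R s) ^ 2 ≤ (t - s) * (R t - R s) :=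
    fun s t => two_pointR hnotbot hz₀ hconv (hR s) (hR t)
  have hmono : Monotone R := by
    intro s t hst
    by_contra hlt
    push_neg at hlt
    have key1 : (t - s) * (R t - R s) ≤ 0 :=
      mul_nonpos_iff.mpr (Or.inl ⟨by linarith, by linarith⟩)
    nlinarith [htwo s t, key1, hμ,
      mul_pos_of_neg_of_neg (show R t - R s < 0 by linarith) (show R t - R s < 0 by linarith)]
  have hRcont : Continuous R := by
    have hlipR : ∀ s t : ℝ, μ * |R s - R t| ≤ 2 * |s - t| := by
      intro s t
      rcases eq_or_ne (R s) (R t) with he | hne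
      · rw [he, sub_self, abs_zero, mul_zero]; positivity
      · have hD : 0 < |R s - R t| := abs_pos.2 (sub_ne_zero.2 hne)
        have h1 := htwo t s
        have h2 : (s - t) * (R s - R t) ≤ |s - t| * |R s - R t| := by
          rw [← abs_mul]; exact le_abs_self _
        have h3 : |R s - R t| ^ 2 = (R s - R t) ^ 2 := sq_abs _
        nlinarith [h1, h2, h3, hD]
    refine (LipschitzWith.of_dist_le_mul (K := Real.toNNReal (2/μ)) (f := R) ?_).continuous
    intro s t
    rw [Real.coe_toNNReal _ (by positivity), Real.dist_eq, Real.dist_eq,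
      div_mul_eq_mul_div, le_div_iff₀ hμ]
    calc |R s - R t| * μ = μ * |R s - R t| := by ring
      _ ≤ 2 * |s - t| := hlipR s t
  obtain ⟨mv, hmv⟩ := hbdd
  have hmv' : ∀ z, mv ≤ v z := fun z => hmv (Set.mem_range_self z)
  set C : ℝ := v x - mv with hCdef
  have hC0 : 0 ≤ C := by rw [hCdef]; linarith [hmv' x]
  set sfun : ℝ → ℝ := fun y => p - τ * (v y - v x) / (y - x) with hsfun
  have hvcont : Continuous v := hv.continuous
  by_cases hA1 : ∃ y, x < y ∧ y ≤ R (sfun y)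
  · -- a fixed point to the right of x
    obtain ⟨y₀, hy₀x, hy₀⟩ := hA1
    set M : ℝ := R (p + τ * C) with hM
    set Y : ℝ := max (max y₀ (x + 1)) M + 1 with hYdef
    have hy₀Y : y₀ ≤ Y := by
      have := le_max_left y₀ (x + 1)
      have := le_max_left (max y₀ (x + 1)) M
      rw [hYdef]; linarith
    have hxY : x + 1 ≤ Y := by
      have := le_max_right y₀ (x + 1)
      have := le_max_left (max y₀ (x + 1)) M
      rw [hYdef]; linarith
    have hMY : M < Y := by
      have := le_max_right (max y₀ (x + 1)) M
      rw [hYdef]; linarith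
    have hsY : sfun Y ≤ p + τ * C := by
      rw [hsfun]
      simp only []
      have h1 : (1:ℝ) ≤ Y - x := by linarith
      have h2 : -C ≤ v Y - v x := by rw [hCdef]; linarith [hmv' Y]
      have h3 : -(τ * C) ≤ τ * (v Y - v x) / (Y - x) := by
        rw [le_div_iff₀ (by linarith : (0:ℝ) < Y - x)]
        nlinarith [mul_nonneg (mul_nonneg hτ.le hC0) (by linarith : (0:ℝ) ≤ Y - x - 1),
          mul_le_mul_of_nonneg_left h2 hτ.le]
      linarith
    have hgY : R (sfun Y) < Y := lt_of_le_of_lt (hmono hsY) hMY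
    have hcont : ContinuousOn (fun y => R (sfun y) - y) (Icc y₀ Y) := by
      refine ContinuousOn.sub (hRcont.comp_continuousOn ?_) continuousOn_id
      rw [hsfun]
      refine ContinuousOn.sub continuousOn_const ?_
      refine ContinuousOn.div
        (continuousOn_const.mul ((hvcont.continuousOn).sub continuousOn_const))
        (continuousOn_id.sub continuousOn_const) ?_
      intro y hy
      have : x < y := lt_of_lt_of_le hy₀x hy.1
      exact sub_ne_zero.2 this.ne'
    have hfY : R (sfun Y) - Y ≤ 0 := by linarith
    have hfy₀ : 0 ≤ R (sfun y₀) - y₀ := by linarith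
    obtain ⟨y', hy'I, hy'⟩ := intermediate_value_Icc' hy₀Y hcont ⟨hfY, hfy₀⟩
    have hxy' : x < y' := lt_of_lt_of_le hy₀x hy'I.1
    have hfix : R (sfun y') = y' := by
      have : R (sfun y') - y' = 0 := hy'
      linarith
    refine ⟨y', sfun y', ?_, Or.inl ⟨hxy'.ne', rfl⟩⟩
    have := hR (sfun y')
    rwa [hfix] at this
  by_cases hA2 : ∃ y, y < x ∧ R (sfun y) ≤ y
  · -- a fixed point to the left of x
    obtain ⟨y₀, hy₀x, hy₀⟩ := hA2
    set M' : ℝ := R (p - τ * C) with hM'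
    set Y' : ℝ := min (min y₀ (x - 1)) M' - 1 with hY'def
    have hy₀Y' : Y' ≤ y₀ := by
      have := min_le_left y₀ (x - 1)
      have := min_le_left (min y₀ (x - 1)) M'
      rw [hY'def]; linarith
    have hxY' : Y' ≤ x - 1 := by
      have := min_le_right y₀ (x - 1)
      have := min_le_left (min y₀ (x - 1)) M'
      rw [hY'def]; linarith
    have hMY' : Y' < M' := by
      have := min_le_right (min y₀ (x - 1)) M'
      rw [hY'def]; linarith
    have hsY' : p - τ * C ≤ sfun Y' := by
      rw [hsfun]
      simp only []
      have h1 : Y' - x ≤ -1 := by linarith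
      have h2 : -C ≤ v Y' - v x := by rw [hCdef]; linarith [hmv' Y']
      have h3 : τ * (v Y' - v x) / (Y' - x) ≤ τ * C := by
        rw [div_le_iff_of_neg (by linarith : Y' - x < 0)]
        nlinarith [mul_nonneg (mul_nonneg hτ.le hC0) (by linarith : (0:ℝ) ≤ x - Y' - 1),
          mul_le_mul_of_nonneg_left h2 hτ.le]
      linarith
    have hgY' : Y' < R (sfun Y') := lt_of_lt_of_le hMY' (hmono hsY')
    have hcont : ContinuousOn (fun y => R (sfun y) - y) (Icc Y' y₀) := by
      refine ContinuousOn.sub (hRcont.comp_continuousOn ?_) continuousOn_id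
      rw [hsfun]
      refine ContinuousOn.sub continuousOn_const ?_
      refine ContinuousOn.div
        (continuousOn_const.mul ((hvcont.continuousOn).sub continuousOn_const))
        (continuousOn_id.sub continuousOn_const) ?_
      intro y hy
      have : y < x := lt_of_le_of_lt hy.2 hy₀x
      exact sub_ne_zero.2 this.ne
    have hfY' : 0 ≤ R (sfun Y') - Y' := by linarith
    have hfy₀ : R (sfun y₀) - y₀ ≤ 0 := by linarith
    obtain ⟨y', hy'I, hy'⟩ := intermediate_value_Icc' hy₀Y' hcont ⟨hfy₀, hfY'⟩
    have hxy' : y' < x := lt_of_le_of_lt hy'I.2 hy₀x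
    have hfix : R (sfun y') = y' := by
      have : R (sfun y') - y' = 0 := hy'
      linarith
    refine ⟨y', sfun y', ?_, Or.inl ⟨hxy'.ne, rfl⟩⟩
    have := hR (sfun y')
    rwa [hfix] at this
  · -- no fixed point on either side: stationary case at x
    push_neg at hA1 hA2
    obtain ⟨K, t, ht, hlipK⟩ := hv x
    obtain ⟨ε, hε0, hball⟩ := Metric.mem_nhds_iff.mp ht
    have hL0 : (0:ℝ) ≤ (K:ℝ) := K.coe_nonneg
    have hlip : ∀ y z : ℝ, |y - x| < ε → |z - x| < ε → |v y - v z| ≤ (K:ℝ) * |y - z| := by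
      intro y z hy hz
      have := LipschitzOnWith.dist_le_mul hlipK y
        (hball (show y ∈ Metric.ball x ε by rwa [Metric.mem_ball, Real.dist_eq])) z
        (hball (show z ∈ Metric.ball x ε by rwa [Metric.mem_ball, Real.dist_eq]))
      rwa [Real.dist_eq, Real.dist_eq] at this
    set hs : ℕ → ℝ := fun n => ε / (2 * ((n:ℝ) + 1)) with hhs
    have hhpos : ∀ n, 0 < hs n := fun n => by rw [hhs]; positivity
    have hhsmall : ∀ n, hs n ≤ ε / 2 := by
      intro n
      rw [hhs]
      rw [div_le_div_iff₀ (show (0:ℝ) < 2 * ((n:ℝ) + 1) by positivity)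
        (show (0:ℝ) < 2 by norm_num)]
      nlinarith [hε0.le, (Nat.cast_nonneg n : (0:ℝ) ≤ (n:ℝ))]
    have hh0 : Tendsto hs atTop (nhds 0) := by
      have heq : hs = fun n : ℕ => (ε/2) * (1/((n:ℝ)+1)) := by
        funext n
        rw [hhs]
        have : ((n:ℝ) + 1) ≠ 0 := by positivity
        field_simp
      rw [heq]
      simpa using tendsto_one_div_add_atTop_nhds_zero_nat.const_mul (ε/2)
    -- right-hand difference quotients
    set a : ℕ → ℝ := fun n => (v (x + hs n) - v x) / hs n with hadef
    have hain : ∀ n, |x + hs n - x| < ε := by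
      intro n
      rw [add_sub_cancel_left, abs_of_pos (hhpos n)]
      linarith [hhsmall n]
    have habnd : ∀ n, a n ∈ Icc (-(K:ℝ)) (K:ℝ) := by
      intro n
      have h2 := hlip (x + hs n) x (hain n) (by simpa using hε0)
      rw [add_sub_cancel_left, abs_of_pos (hhpos n)] at h2
      refine Set.mem_Icc.mpr (abs_le.mp ?_)
      rw [hadef]
      simp only []
      rw [abs_div, abs_of_pos (hhpos n), div_le_iff₀ (hhpos n)]
      exact h2
    obtain ⟨Dp, -, φp, hφp, hconvp⟩ :=
      tendsto_subseq_of_bounded (Metric.isBounded_Icc (-(K:ℝ)) (K:ℝ)) habnd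
    have hΔpmem : Dp ∈ clarkeSubdiffR v x :=
      clarke_mem_right hε0 hL0 hlip (h := fun n => hs (φp n)) (fun n => hhpos _)
        (hh0.comp hφp.tendsto_atTop) (by simpa [hadef, Function.comp_def] using hconvp)
    have hsfvalR : ∀ n, sfun (x + hs n) = p - τ * a n := by
      intro n
      rw [hsfun, hadef]
      simp only []
      rw [add_sub_cancel_left, mul_div_assoc]
    have htend1R : Tendsto (fun n => R (p - τ * a (φp n))) atTop
        (nhds (R (p - τ * Dp))) :=
      (hRcont.tendsto _).comp (tendsto_const_nhds.sub (hconvp.const_mul τ))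
    have htend2R : Tendsto (fun n => x + hs (φp n)) atTop (nhds x) := by
      simpa using tendsto_const_nhds.add (hh0.comp hφp.tendsto_atTop)
    have hRsp : R (p - τ * Dp) ≤ x := by
      refine le_of_tendsto_of_tendsto' htend1R htend2R fun n => ?_
      have h1 := hA1 (x + hs (φp n)) (by linarith [hhpos (φp n)])
      rw [hsfvalR (φp n)] at h1
      exact h1.le
    -- left-hand difference quotients
    set b : ℕ → ℝ := fun n => (v (x - hs n) - v x) / (-(hs n)) with hbdef
    have hbin : ∀ n, |x - hs n - x| < ε := by
      intro n
      rw [show x - hs n - x = -(hs n) by ring, abs_neg, abs_of_pos (hhpos n)]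
      linarith [hhsmall n]
    have hbbnd : ∀ n, b n ∈ Icc (-(K:ℝ)) (K:ℝ) := by
      intro n
      have h2 := hlip (x - hs n) x (hbin n) (by simpa using hε0)
      rw [show x - hs n - x = -(hs n) by ring, abs_neg, abs_of_pos (hhpos n)] at h2
      refine Set.mem_Icc.mpr (abs_le.mp ?_)
      rw [hbdef]
      simp only []
      rw [abs_div, abs_neg, abs_of_pos (hhpos n), div_le_iff₀ (hhpos n)]
      exact h2
    obtain ⟨Dm, -, φm, hφm, hconvm⟩ :=
      tendsto_subseq_of_bounded (Metric.isBounded_Icc (-(K:ℝ)) (K:ℝ)) hbbnd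
    have hΔmmem : Dm ∈ clarkeSubdiffR v x :=
      clarke_mem_left hε0 hL0 hlip (h := fun n => hs (φm n)) (fun n => hhpos _)
        (hh0.comp hφm.tendsto_atTop) (by simpa [hbdef, Function.comp_def] using hconvm)
    have hsfvalL : ∀ n, sfun (x - hs n) = p - τ * b n := by
      intro n
      rw [hsfun, hbdef]
      simp only []
      rw [show x - hs n - x = -(hs n) by ring, mul_div_assoc]
    have htend1L : Tendsto (fun n => R (p - τ * b (φm n))) atTop
        (nhds (R (p - τ * Dm))) :=
      (hRcont.tendsto _).comp (tendsto_const_nhds.sub (hconvm.const_mul τ))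
    have htend2L : Tendsto (fun n => x - hs (φm n)) atTop (nhds x) := by
      simpa using tendsto_const_nhds.sub (hh0.comp hφm.tendsto_atTop)
    have hRsm : x ≤ R (p - τ * Dm) := by
      refine le_of_tendsto_of_tendsto' htend2L htend1L fun n => ?_
      have h1 := hA2 (x - hs (φm n)) (by linarith [hhpos (φm n)])
      rw [hsfvalL (φm n)] at h1
      exact h1.le
    -- combine
    rcases le_or_gt (p - τ * Dp) (p - τ * Dm) with hcmp | hcmp
    · have hsub := intermediate_value_Icc hcmp hRcont.continuousOn
      obtain ⟨q, hqI, hqx⟩ := hsub ⟨hRsp, hRsm⟩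
      have hw1 : (p - q) / τ ≤ Dp := by
        rw [div_le_iff₀ hτ]
        have := hqI.1
        linarith
      have hw2 : Dm ≤ (p - q) / τ := by
        rw [le_div_iff₀ hτ]
        have := hqI.2
        linarith
      refine ⟨x, q, ?_, Or.inr ⟨rfl, (p - q) / τ,
        clarke_between hΔmmem hΔpmem hw2 hw1, ?_⟩⟩
      · have := hR q
        rwa [hqx] at this
      · field_simp; ring
    · have hxeq : R (p - τ * Dp) = x :=
        le_antisymm hRsp (le_trans hRsm (hmono hcmp.le))
      refine ⟨x, p - τ * Dp, ?_, Or.inr ⟨rfl, Dp, hΔpmem, rfl⟩⟩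
      have := hR (p - τ * Dp)
      rwa [hxeq] at this
end

section
/- Let v: ℝ → ℝ be convex and j: ℝ → ℝ ∪ {+∞} be μ-convex with μ > 0. Then for any τ > 0, x ∈ dom(∂j), and p ∈ ∂j(x), the solution y to the scalar Bregman Itoh–Abe inclusion p - τ (v(y) - v(x))/(y - x) ∈ ∂j(y) (interpreting the difference quotient at y = x as an element of ∂v(x)) is unique, i.e. there cannot be two distinct values y₁ ≠ y₂ both solving the inclusion. -/
open Filter

/-- `y` solves the scalar Bregman Itoh–Abe inclusion
`p - τ (v(y) - v(x))/(y - x) ∈ ∂j(y)`, interpreting the difference quotient at `y = x`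
as an element of `∂v(x)`. -/
noncomputable def IsBIASolution (v : ℝ → ℝ) (j : ℝ → EReal) (τ x p y : ℝ) : Prop :=
  (y ≠ x ∧ p - τ * (v y - v x) / (y - x) ∈ subdiffR j y) ∨
    (y = x ∧ ∃ w ∈ clarkeSubdiffR v x, p - τ * w ∈ subdiffR j x)

/-- Two-point convexity inequality, real-valued version. -/
lemma BIAaux.conv2 {v : ℝ → ℝ} (hv : ConvexOn ℝ Set.univ v) {a b : ℝ} (x y : ℝ)
    (ha : 0 ≤ a) (hb : 0 ≤ b) (hab : a + b = 1) :
    v (a * x + b * y) ≤ a * v x + b * v y := by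
  simpa using hv.2 (Set.mem_univ x) (Set.mem_univ y) ha hb hab

/-- For a convex function, the Clarke directional derivative is bounded by the
secant slope with step `1`. -/
lemma BIAaux.clarkeDeriv_le {v : ℝ → ℝ} (hv : ConvexOn ℝ Set.univ v) (x d : ℝ) :
    clarkeDerivR v x d ≤ v (x + d) - v x := by
  have hcont : Continuous v := continuousOn_univ.mp
    (hv.continuousOn isOpen_univ)
  set F := (nhds x) ×ˢ (nhdsWithin (0:ℝ) (Set.Ioi 0)) with hF
  haveI : (nhdsWithin (0:ℝ) (Set.Ioi 0)).NeBot := nhdsGT_neBot 0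
  have h1 : Tendsto (fun q : ℝ × ℝ => q.1) F (nhds x) := tendsto_fst
  have hg : Tendsto (fun q : ℝ × ℝ => v (q.1 + d) - v q.1) F (nhds (v (x + d) - v x)) :=
    ((hcont.tendsto (x + d)).comp (h1.add_const d)).sub ((hcont.tendsto x).comp h1)
  have hmem : ∀ᶠ q : ℝ × ℝ in F, q.2 ∈ Set.Ioo (0:ℝ) 1 :=
    Eventually.prod_inr (eventually_mem_set.mpr
      (Ioo_mem_nhdsGT_of_mem ⟨le_refl _, one_pos⟩)) _
  have hub : ∀ᶠ q : ℝ × ℝ in F,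
      (v (q.1 + q.2 * d) - v q.1) / q.2 ≤ v (q.1 + d) - v q.1 := by
    filter_upwards [hmem] with q hq
    obtain ⟨ht0, ht1⟩ := hq
    have hc := BIAaux.conv2 hv (a := q.2) (b := 1 - q.2) (q.1 + d) q.1
      (le_of_lt ht0) (by linarith) (by ring)
    have harg : q.2 * (q.1 + d) + (1 - q.2) * q.1 = q.1 + q.2 * d := by ring
    rw [harg] at hc
    rw [div_le_iff₀ ht0]
    nlinarith
  have hlbpt : ∀ᶠ q : ℝ × ℝ in F,
      v q.1 - v (q.1 - d) ≤ (v (q.1 + q.2 * d) - v q.1) / q.2 := by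
    filter_upwards [hmem] with q hq
    obtain ⟨ht0, _⟩ := hq
    have h1t : (0:ℝ) < 1 + q.2 := by linarith
    have hc := BIAaux.conv2 hv (q.1 - d) (q.1 + q.2 * d)
      (a := q.2 / (1 + q.2)) (b := 1 / (1 + q.2))
      (by positivity) (by positivity) (by field_simp; ring)
    have harg : q.2 / (1 + q.2) * (q.1 - d) + 1 / (1 + q.2) * (q.1 + q.2 * d) = q.1 := by
      field_simp; ring
    rw [harg] at hc
    rw [le_div_iff₀ ht0]
    have := mul_le_mul_of_nonneg_left hc (le_of_lt h1t)
    field_simp at this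
    nlinarith
  have hh : Tendsto (fun q : ℝ × ℝ => v q.1 - v (q.1 - d)) F (nhds (v x - v (x - d))) :=
    ((hcont.tendsto x).comp h1).sub ((hcont.tendsto (x - d)).comp (h1.sub_const d))
  have hev : ∀ᶠ q : ℝ × ℝ in F,
      v x - v (x - d) - 1 ≤ (v (q.1 + q.2 * d) - v q.1) / q.2 := by
    filter_upwards [hlbpt, hh.eventually (eventually_gt_nhds (by linarith :
      v x - v (x - d) - 1 < v x - v (x - d)))] with q ha hb
    linarith
  have hcb : F.IsCoboundedUnder (· ≤ ·)
      (fun q : ℝ × ℝ => (v (q.1 + q.2 * d) - v q.1) / q.2) :=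
    isCoboundedUnder_le_of_eventually_le F hev
  have hbd : F.IsBoundedUnder (· ≤ ·) (fun q : ℝ × ℝ => v (q.1 + d) - v q.1) :=
    hg.isBoundedUnder_le
  calc clarkeDerivR v x d
      ≤ Filter.limsup (fun q : ℝ × ℝ => v (q.1 + d) - v q.1) F :=
        limsup_le_limsup hub hcb hbd
    _ = v (x + d) - v x := hg.limsup_eq

/-- A Clarke subgradient of a convex function is below the forward secant slope. -/
lemma BIAaux.w_le_slope {v : ℝ → ℝ} (hv : ConvexOn ℝ Set.univ v) {x w : ℝ}
    (hw : w ∈ clarkeSubdiffR v x) {y : ℝ} (h : x < y) :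
    w ≤ (v y - v x) / (y - x) := by
  have h1 := (hw (y - x)).trans (BIAaux.clarkeDeriv_le hv x (y - x))
  rw [add_sub_cancel] at h1
  rw [le_div_iff₀ (sub_pos.2 h)]
  linarith [h1, mul_comm (y - x) w]
  
/-- A Clarke subgradient of a convex function is above the backward secant slope. -/
lemma BIAaux.slope_le_w {v : ℝ → ℝ} (hv : ConvexOn ℝ Set.univ v) {x w : ℝ}
    (hw : w ∈ clarkeSubdiffR v x) {y : ℝ} (h : y < x) :
    (v y - v x) / (y - x) ≤ w := by
  have h1 := (hw (y - x)).trans (BIAaux.clarkeDeriv_le hv x (y - x))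
  rw [add_sub_cancel] at h1
  rw [div_le_iff_of_neg (sub_neg.2 h)]
  linarith [h1, mul_comm (y - x) w]

/-- If `j` is finite somewhere, it is finite at any point with nonempty subdifferential. -/
lemma BIAaux.finite_of_subdiff {j : ℝ → EReal} {x y q : ℝ} (hx : j x ≠ ⊤)
    (hq : q ∈ subdiffR j y) : j y ≠ ⊤ := by
  intro hT
  have h := hq x
  rw [hT] at h
  simp only [EReal.top_add_of_ne_bot (EReal.coe_ne_bot _)] at h
  exact hx (top_le_iff.mp h)

/-- Strict monotonicity of the subdifferential of a `μ`-strongly-convex function. -/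
lemma BIAaux.subdiff_strict_mono {j : ℝ → EReal} (hnotbot : ∀ z, j z ≠ ⊥)
    {μ : ℝ} (hμ : 0 < μ)
    (hconv : ERealConvexR (fun z => j z - ((μ / 2 * z ^ 2 : ℝ) : EReal)))
    {y₁ y₂ q₁ q₂ : ℝ} (h1 : j y₁ ≠ ⊤) (h2 : j y₂ ≠ ⊤)
    (hq₁ : q₁ ∈ subdiffR j y₁) (hq₂ : q₂ ∈ subdiffR j y₂) (hlt : y₁ < y₂) : q₁ < q₂ := by
  set a := (j y₁).toReal with haa
  set b := (j y₂).toReal with hbb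
  have ha : j y₁ = (a : EReal) := (EReal.coe_toReal h1 (hnotbot _)).symm
  have hb : j y₂ = (b : EReal) := (EReal.coe_toReal h2 (hnotbot _)).symm
  set m : ℝ := 2⁻¹ * y₁ + 2⁻¹ * y₂ with hm
  have hcm := hconv y₁ y₂ 2⁻¹ 2⁻¹ (by norm_num) (by norm_num) (by norm_num)
  simp only [ha, hb] at hcm
  have hrhs : ((2⁻¹:ℝ) : EReal) * ((a : EReal) - ((μ / 2 * y₁ ^ 2 : ℝ) : EReal)) +
      ((2⁻¹:ℝ) : EReal) * ((b : EReal) - ((μ / 2 * y₂ ^ 2 : ℝ) : EReal)) =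
      ((2⁻¹ * (a - μ / 2 * y₁ ^ 2) + 2⁻¹ * (b - μ / 2 * y₂ ^ 2) : ℝ) : EReal) := by
    norm_cast
  rw [hrhs] at hcm
  have hmtop : j m ≠ ⊤ := by
    intro hT
    rw [hT, EReal.top_sub_coe] at hcm
    exact (EReal.coe_ne_top _) (top_le_iff.mp hcm)
  set c := (j m).toReal with hcc
  have hc : j m = (c : EReal) := (EReal.coe_toReal hmtop (hnotbot _)).symm
  rw [hc] at hcm
  have i3 : c - μ / 2 * m ^ 2 ≤ 2⁻¹ * (a - μ / 2 * y₁ ^ 2) + 2⁻¹ * (b - μ / 2 * y₂ ^ 2) := by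
    exact_mod_cast hcm
  have i1 : a + q₁ * (m - y₁) ≤ c := by
    have := hq₁ m
    rw [ha, hc] at this
    exact_mod_cast this
  have i2 : b + q₂ * (m - y₂) ≤ c := by
    have := hq₂ m
    rw [hb, hc] at this
    exact_mod_cast this
  have hm1 : m - y₁ = (y₂ - y₁) / 2 := by rw [hm]; ring
  have hm2 : m - y₂ = -((y₂ - y₁) / 2) := by rw [hm]; ring
  rw [hm1] at i1
  rw [hm2] at i2
  have hmsq : μ / 2 * m ^ 2 = 2⁻¹ * (μ / 2 * y₁ ^ 2) + 2⁻¹ * (μ / 2 * y₂ ^ 2)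
      - μ / 8 * (y₂ - y₁) ^ 2 := by rw [hm]; ring
  rw [hmsq] at i3
  nlinarith [sq_nonneg (y₂ - y₁), mul_pos hμ (sub_pos.2 hlt), sub_pos.2 hlt]

/-- Core contradiction: two subgradient relations with comparable slopes. -/
lemma BIAaux.contr {j : ℝ → EReal} (hnotbot : ∀ z, j z ≠ ⊥) {μ : ℝ} (hμ : 0 < μ)
    (hconv : ERealConvexR (fun z => j z - ((μ / 2 * z ^ 2 : ℝ) : EReal)))
    {τ : ℝ} (hτ : 0 < τ) {x : ℝ} (hx : j x ≠ ⊤) {p s₁ s₂ y₁ y₂ : ℝ}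
    (hq₁ : p - τ * s₁ ∈ subdiffR j y₁) (hq₂ : p - τ * s₂ ∈ subdiffR j y₂)
    (hs : s₁ ≤ s₂) (hlt : y₁ < y₂) : False := by
  have h1 := BIAaux.finite_of_subdiff hx hq₁
  have h2 := BIAaux.finite_of_subdiff hx hq₂
  have := BIAaux.subdiff_strict_mono hnotbot hμ hconv h1 h2 hq₁ hq₂ hlt
  nlinarith

/-- One-sided uniqueness for the Bregman Itoh–Abe update. -/
lemma BIAaux.key (v : ℝ → ℝ) (hv : ConvexOn ℝ Set.univ v)
    (j : ℝ → EReal) (hnotbot : ∀ z, j z ≠ ⊥)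
    (μ : ℝ) (hμ : 0 < μ)
    (hconv : ERealConvexR (fun z => j z - ((μ / 2 * z ^ 2 : ℝ) : EReal)))
    (τ : ℝ) (hτ : 0 < τ)
    (x : ℝ) (hx : j x ≠ ⊤) (p : ℝ)
    {y₁ y₂ : ℝ} (hs₁ : IsBIASolution v j τ x p y₁) (hs₂ : IsBIASolution v j τ x p y₂)
    (hlt : y₁ < y₂) : False := by
  have hassoc : ∀ y : ℝ, p - τ * (v y - v x) / (y - x)
      = p - τ * ((v y - v x) / (y - x)) := fun y => by rw [mul_div_assoc]
  rcases hs₁ with ⟨hne₁, hq₁⟩ | ⟨he₁, w₁, hw₁, hq₁⟩ <;>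
    rcases hs₂ with ⟨hne₂, hq₂⟩ | ⟨he₂, w₂, hw₂, hq₂⟩
  · rw [hassoc] at hq₁ hq₂
    exact BIAaux.contr hnotbot hμ hconv hτ hx hq₁ hq₂
      (hv.secant_mono (Set.mem_univ x) (Set.mem_univ y₁) (Set.mem_univ y₂)
        hne₁ hne₂ (le_of_lt hlt)) hlt
  · -- y₂ = x, so y₁ < x
    subst he₂
    rw [hassoc] at hq₁
    exact BIAaux.contr hnotbot hμ hconv hτ hx hq₁ hq₂
      (BIAaux.slope_le_w hv hw₂ hlt) hlt
  · -- y₁ = x, so x < y₂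
    subst he₁
    rw [hassoc] at hq₂
    exact BIAaux.contr hnotbot hμ hconv hτ hx hq₁ hq₂
      (BIAaux.w_le_slope hv hw₁ hlt) hlt
  · exact absurd (he₁.trans he₂.symm) (ne_of_lt hlt)

/-- for convex `v` and `μ`-convex `j` (`μ > 0`), the scalar Bregman Itoh–Abe
update is unique. -/
theorem scalar_bregman_itoh_abe_uniqueness_convex
    (v : ℝ → ℝ) (hv : ConvexOn ℝ Set.univ v)
    (j : ℝ → EReal) (hnotbot : ∀ z, j z ≠ ⊥)
    (μ : ℝ) (hμ : 0 < μ)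
    (hconv : ERealConvexR (fun z => j z - ((μ / 2 * z ^ 2 : ℝ) : EReal)))
    (τ : ℝ) (hτ : 0 < τ)
    (x : ℝ) (hx : j x ≠ ⊤) (p : ℝ) (hp : p ∈ subdiffR j x) :
    ∀ y₁ y₂ : ℝ, IsBIASolution v j τ x p y₁ → IsBIASolution v j τ x p y₂ → y₁ = y₂ := by
  intro y₁ y₂ h1 h2
  by_contra hne
  rcases lt_or_gt_of_ne hne with h | h
  · exact BIAaux.key v hv j hnotbot μ hμ hconv τ hτ x hx p h1 h2 h
  · exact BIAaux.key v hv j hnotbot μ hμ hconv τ hτ x hx p h2 h1 h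
end

section
/- For the quadratic V(x) = (1/2)⟨x, Ax⟩ - ⟨b, x⟩ with A symmetric and a^i_i > 0, the successive-over-relaxation (SOR) coordinate update y^{k,i} = y^{k,i-1} - (ω/a^i_i)(⟨a^i, y^{k,i-1}⟩ - b_i) e^i with ω ∈ (0,2) satisfies the scalar Itoh–Abe discrete gradient equation: with τ_i = 2ω/((2-ω)a^i_i), the increment z = y^{k,i}_i - y^{k,i-1}_i satisfies z = -τ_i (V(y^{k,i}) - V(y^{k,i-1}))/z whenever z ≠ 0. -/
/-!
Along the coordinate line `x + z eᵢ` the quadratic `V` is a parabola, so its difference quotient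
is `gᵢ + (aᵢᵢ/2) z` with `gᵢ = ⟨aⁱ, x⟩ - bᵢ` the partial derivative at `x`. The SOR step is
`z = -(ω/aᵢᵢ) gᵢ`, i.e. `gᵢ = -(aᵢᵢ/ω) z`, so the difference quotient equals
`aᵢᵢ (1/2 - 1/ω) z = -z/τᵢ`.
-/

open Matrix

section
variable {n K : Type*} [Fintype n] [DecidableEq n]

theorem Matrix.IsSymm.dotProduct_mulVec_add_smul_single [CommRing K] {A : Matrix n n K}
    (hA : A.IsSymm) (x : n → K) (i : n) (z : K) :
    (x + z • Pi.single i 1) ⬝ᵥ A *ᵥ (x + z • Pi.single i 1)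
      = x ⬝ᵥ A *ᵥ x + 2 * z * (A *ᵥ x) i + z ^ 2 * A i i := by
  have hcross : x ⬝ᵥ A.col i = (A *ᵥ x) i := by
    rw [← mulVec_single_one, dotProduct_mulVec, ← vecMul_transpose, hA.eq, dotProduct_single_one]
  simp only [mulVec_add, mulVec_smul, add_dotProduct, dotProduct_add, smul_dotProduct,
    dotProduct_smul, hcross, single_one_dotProduct, mulVec_single_one, col_apply, smul_eq_mul]
  ring

theorem Matrix.IsSymm.quadratic_coord_diffQuot [Field K] [NeZero (2 : K)] {A : Matrix n n K}
    (hA : A.IsSymm) (b x : n → K) (i : n) {z : K} (hz : z ≠ 0) :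
    ((1 / 2) * ((x + z • Pi.single i 1) ⬝ᵥ A *ᵥ (x + z • Pi.single i 1))
        - b ⬝ᵥ (x + z • Pi.single i 1) - ((1 / 2) * (x ⬝ᵥ A *ᵥ x) - b ⬝ᵥ x)) / z
      = (A *ᵥ x) i - b i + A i i / 2 * z := by
  rw [hA.dotProduct_mulVec_add_smul_single, dotProduct_add, dotProduct_smul, dotProduct_single_one]
  field_simp
  ring
end

/-- for the quadratic `V(x) = (1/2)⟨x, Ax⟩ - ⟨b, x⟩` with `A` symmetric and
`a^i_i > 0`, the SOR coordinate update with `ω ∈ (0,2)` satisfies the scalar Itoh–Abe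
discrete gradient equation with time step `τ_i = 2ω/((2-ω) a^i_i)`. -/
theorem sor_is_itoh_abe (m : ℕ) (A : Matrix (Fin m) (Fin m) ℝ) (hsym : A.IsSymm)
    (b : Fin m → ℝ) (V : (Fin m → ℝ) → ℝ)
    (hV : ∀ x : Fin m → ℝ, V x = (1 / 2) * (x ⬝ᵥ A.mulVec x) - b ⬝ᵥ x)
    (i : Fin m) (hAii : 0 < A i i)
    (ω : ℝ) (hω : ω ∈ Set.Ioo (0:ℝ) 2)
    (x : Fin m → ℝ) (z τ : ℝ)
    (hz : z = -(ω / A i i) * (A.mulVec x i - b i))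
    (hτ : τ = 2 * ω / ((2 - ω) * A i i))
    (hzne : z ≠ 0) :
    z = -τ * (V (x + z • (Pi.single i (1:ℝ) : Fin m → ℝ)) - V x) / z := by
  obtain ⟨hω0, hω2⟩ := hω
  have hA : A i i ≠ 0 := hAii.ne'
  have hω : ω ≠ 0 := hω0.ne'
  have hω2' : 2 - ω ≠ 0 := by linarith
  have hquot : (V (x + z • Pi.single i 1) - V x) / z = (A *ᵥ x) i - b i + A i i / 2 * z := by
    rw [hV, hV]
    exact hsym.quadratic_coord_diffQuot b x i hzne
  have hgrad : (A *ᵥ x) i - b i = -(A i i / ω) * z := by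
    rw [hz]
    field_simp
  rw [mul_div_assoc, hquot, hgrad, hτ]
  field_simp
  ring
end
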